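/- arXiv:1503.00652 — 6 statements merged into one kernel-verified Lean document; each statement's English description precedes it below -/
import Mathlib

section
/- Let H be a Hilbert space and K : H → H a compact linear operator, and let μ ∈ ℂ. If the only solution of u = μKu is u = 0, then for every f ∈ H the equation u = μKu + f has a unique solution u ∈ H (i.e., I - μK is bijective). -/
/-!
For `μ ≠ 0` the hypothesis says that `μ⁻¹` is not an eigenvalue of `K`, so by the Fredholm
alternative for compact operators `μ⁻¹` lies in the resolvent set of `K`, and
`I - μ K = μ (μ⁻¹ I - K)` is invertible.
-/

open Module End

theorem Module.End.not_hasEigenvalue_inv {K M : Type*} [Field K] [AddCommGroup M] [Module K M]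
    {f : End K M} {μ : K} (hμ : μ ≠ 0) (h : ∀ u : M, u = μ • f u → u = 0) :
    ¬ f.HasEigenvalue μ⁻¹ := by
  intro hf
  obtain ⟨v, hv⟩ := hf.exists_hasEigenvector
  exact hv.2 (h v (by rw [hv.apply_eq_smul, smul_inv_smul₀ hμ]))

theorem IsCompactOperator.bijective_id_sub_smul {𝕜 X : Type*} [NontriviallyNormedField 𝕜]
    [NormedAddCommGroup X] [NormedSpace 𝕜 X] [CompleteSpace X] {T : X →L[𝕜] X} {μ : 𝕜}
    (hT : IsCompactOperator T) (h : ∀ u : X, u = μ • T u → u = 0) :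
    Function.Bijective (fun u ↦ u - μ • T u) := by
  rcases eq_or_ne μ 0 with rfl | hμ
  · simp only [zero_smul, sub_zero]
    exact Function.bijective_id
  have hres : μ⁻¹ ∈ resolventSet 𝕜 T :=
    (hT.hasEigenvalue_or_mem_resolventSet (inv_ne_zero hμ)).resolve_left
      (not_hasEigenvalue_inv hμ h)
  have hfactor : (1 - μ • T : X →L[𝕜] X) = μ • (algebraMap 𝕜 _ μ⁻¹ - T) := by
    rw [smul_sub, Algebra.algebraMap_eq_smul_one, smul_smul, mul_inv_cancel₀ hμ, one_smul]
  have hunit : IsUnit (1 - μ • T) := hfactor ▸ hres.smul (IsUnit.mk0 μ hμ).unit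
  exact ContinuousLinearMap.isUnit_iff_bijective.mp hunit

/-- Fredholm alternative, first part: if `u = μ K u` only for `u = 0`, then
`u = μ K u + f` is uniquely solvable for every `f`. -/
theorem fredholm_alternative_injective_implies_bijective
    {H : Type*} [NormedAddCommGroup H] [InnerProductSpace ℂ H] [CompleteSpace H]
    (K : H →L[ℂ] H) (hK : IsCompactOperator K) (μ : ℂ)
    (h : ∀ u : H, u = μ • K u → u = 0) :
    ∀ f : H, ∃! u : H, u = μ • K u + f := by
  intro f
  simpa only [← sub_eq_iff_eq_add'] using (hK.bijective_id_sub_smul h).existsUnique f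
end

section
/- Let H be a Hilbert space, K : H → H a compact linear operator, and μ ∈ ℂ. An element f ∈ H lies in the range of I - μK if and only if f is orthogonal to the null space of I - conj(μ)K*, where K* is the adjoint of K. -/
open scoped InnerProductSpace
open Filter Topology

/-!
Write `T = I - μK`. On `(ker T)ᗮ` the operator `T` is bounded below: otherwise unit vectors
`uₙ ∈ (ker T)ᗮ` with `T uₙ → 0` would, since `uₙ = T uₙ + μK uₙ` and `K` is compact, have a
subsequence converging to a unit vector lying in both `ker T` and `(ker T)ᗮ`. Hence the range of
`T` is closed, so it equals `(range T)ᗮᗮ = (ker T*)ᗮ`.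
-/

theorem IsCompactOperator.exists_subseq_tendsto_of_tendsto_sub_apply
    {𝕜 E : Type*} [NontriviallyNormedField 𝕜] [NormedAddCommGroup E] [NormedSpace 𝕜 E]
    {C : E →L[𝕜] E} (hC : IsCompactOperator C) {u : ℕ → E} {r : ℝ} (hu : ∀ n, ‖u n‖ ≤ r)
    (hCu : Tendsto (fun n ↦ u n - C (u n)) atTop (𝓝 0)) :
    ∃ a, ∃ φ : ℕ → ℕ, StrictMono φ ∧ Tendsto (fun n ↦ u (φ n)) atTop (𝓝 a) := by
  obtain ⟨S, hS, hCS⟩ := hC.image_closedBall_subset_compact (f := (C : E →ₗ[𝕜] E)) r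
  have hCuS : ∀ n, C (u n) ∈ S := fun n ↦ hCS ⟨u n, by simpa using hu n, rfl⟩
  obtain ⟨a, -, φ, hφ, hCa⟩ := hS.tendsto_subseq hCuS
  refine ⟨a, φ, hφ, ?_⟩
  simpa using (hCu.comp hφ.tendsto_atTop).add hCa

theorem ContinuousLinearMap.exists_unit_seq_tendsto_zero_of_not_bounded_below
    {𝕜 E F : Type*} [RCLike 𝕜] [NormedAddCommGroup E] [NormedSpace 𝕜 E]
    [SeminormedAddCommGroup F] [NormedSpace 𝕜 F] (T : E →L[𝕜] F) {V : Submodule 𝕜 E}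
    (h : ¬ ∃ c > 0, ∀ x ∈ V, c * ‖x‖ ≤ ‖T x‖) :
    ∃ u : ℕ → E, (∀ n, u n ∈ V ∧ ‖u n‖ = 1) ∧ Tendsto (fun n ↦ T (u n)) atTop (𝓝 0) := by
  push Not at h
  choose x hxV hTx using fun n : ℕ ↦ h (1 / (n + 1)) (by positivity)
  have hx : ∀ n, x n ≠ 0 := fun n hx ↦ by simpa [hx] using hTx n
  refine ⟨fun n ↦ (‖x n‖⁻¹ : 𝕜) • x n,
    fun n ↦ ⟨V.smul_mem _ (hxV n), norm_smul_inv_norm (hx n)⟩, ?_⟩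
  refine squeeze_zero_norm (fun n ↦ ?_) tendsto_one_div_add_atTop_nhds_zero_nat
  have hpos : 0 < ‖x n‖ := norm_pos_iff.2 (hx n)
  rw [map_smul, norm_smul, norm_inv, RCLike.norm_ofReal, abs_norm, inv_mul_le_iff₀ hpos]
  linarith [hTx n]

theorem ContinuousLinearMap.isClosed_image_of_bounded_below
    {𝕜 E F : Type*} [NontriviallyNormedField 𝕜] [NormedAddCommGroup E] [NormedSpace 𝕜 E]
    [CompleteSpace E] [NormedAddCommGroup F] [NormedSpace 𝕜 F] (T : E →L[𝕜] F)
    {V : Submodule 𝕜 E} (hV : IsClosed (V : Set E)) {c : ℝ} (hc : 0 < c)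
    (h : ∀ x ∈ V, c * ‖x‖ ≤ ‖T x‖) : IsClosed (T '' V) := by
  have : CompleteSpace V := hV.completeSpace_coe
  have hanti : AntilipschitzWith ⟨c⁻¹, (inv_pos.2 hc).le⟩ (T ∘L V.subtypeL) :=
    (T ∘L V.subtypeL).antilipschitz_of_bound fun x ↦
      (le_inv_mul_iff₀ hc).2 (h x x.2)
  rw [Set.image_eq_range]
  exact hanti.isClosed_range (T ∘L V.subtypeL).uniformContinuous

section CompactPerturbation

variable {𝕜 E : Type*} [RCLike 𝕜] [NormedAddCommGroup E] [InnerProductSpace 𝕜 E]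

theorem IsCompactOperator.exists_pos_mul_norm_le_of_mem_orthogonal_ker_id_sub
    {C : E →L[𝕜] E} (hC : IsCompactOperator C) :
    ∃ c > 0, ∀ x ∈ (ContinuousLinearMap.id 𝕜 E - C).kerᗮ,
      c * ‖x‖ ≤ ‖(ContinuousLinearMap.id 𝕜 E - C) x‖ := by
  set T := ContinuousLinearMap.id 𝕜 E - C
  set N := T.ker
  by_contra h
  obtain ⟨u, hu, hTu⟩ := T.exists_unit_seq_tendsto_zero_of_not_bounded_below h
  obtain ⟨a, φ, hφ, ha⟩ :=
    hC.exists_subseq_tendsto_of_tendsto_sub_apply (fun n ↦ (hu n).2.le) hTu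
  have haN : a ∈ N :=
    tendsto_nhds_unique ((T.continuous.tendsto a).comp ha) (hTu.comp hφ.tendsto_atTop)
  have ha_orth : a ∈ Nᗮ :=
    N.isClosed_orthogonal.mem_of_tendsto ha (Eventually.of_forall fun n ↦ (hu (φ n)).1)
  have ha1 : ‖a‖ = 1 :=
    tendsto_nhds_unique ((continuous_norm.tendsto a).comp ha) (by simp [Function.comp_def, hu])
  have ha0 : a = 0 := by simpa using N.inf_orthogonal_eq_bot.le ⟨haN, ha_orth⟩
  simp [ha0] at ha1

theorem IsCompactOperator.isClosed_range_id_sub [CompleteSpace E] {C : E →L[𝕜] E}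
    (hC : IsCompactOperator C) :
    IsClosed ((ContinuousLinearMap.id 𝕜 E - C).range : Set E) := by
  set T := ContinuousLinearMap.id 𝕜 E - C
  have : T.ker.HasOrthogonalProjection := by
    have := T.isClosed_ker.completeSpace_coe
    infer_instance
  have hrange : T.kerᗮ.map (T : E →ₗ[𝕜] E) = T.range :=
    Submodule.map_eq_range_iff.2 T.ker.isCompl_orthogonal.symm.codisjoint
  obtain ⟨c, hc, hcoer⟩ := hC.exists_pos_mul_norm_le_of_mem_orthogonal_ker_id_sub
  rw [← hrange, Submodule.map_coe]
  exact T.isClosed_image_of_bounded_below T.ker.isClosed_orthogonal hc hcoer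

end CompactPerturbation

theorem ContinuousLinearMap.range_eq_orthogonal_ker_adjoint_of_isClosed
    {𝕜 E F : Type*} [RCLike 𝕜] [NormedAddCommGroup E] [InnerProductSpace 𝕜 E] [CompleteSpace E]
    [NormedAddCommGroup F] [InnerProductSpace 𝕜 F] [CompleteSpace F] (T : E →L[𝕜] F)
    (hT : IsClosed (T.range : Set F)) : T.range = (adjoint T).kerᗮ := by
  have := hT.completeSpace_coe
  rw [← T.orthogonal_range, Submodule.orthogonal_orthogonal]

/-- Fredholm alternative, solvability condition: `f ∈ R(I - μK)` iff `f` is orthogonal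
to `N(I - conj(μ) K*)`. -/
theorem fredholm_range_eq_orthogonal_of_adjoint_kernel
    {H : Type*} [NormedAddCommGroup H] [InnerProductSpace ℂ H] [CompleteSpace H]
    (K : H →L[ℂ] H) (hK : IsCompactOperator K) (μ : ℂ) (f : H) :
    f ∈ LinearMap.range ((ContinuousLinearMap.id ℂ H - μ • K : H →L[ℂ] H) : H →ₗ[ℂ] H) ↔
      ∀ v ∈ LinearMap.ker
          ((ContinuousLinearMap.id ℂ H - (starRingEnd ℂ μ) • ContinuousLinearMap.adjoint K :
            H →L[ℂ] H) : H →ₗ[ℂ] H),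
        ⟪f, v⟫_ℂ = 0 := by
  have hadj : ContinuousLinearMap.adjoint (ContinuousLinearMap.id ℂ H - μ • K) =
      ContinuousLinearMap.id ℂ H - starRingEnd ℂ μ • ContinuousLinearMap.adjoint K := by
    rw [map_sub, ContinuousLinearMap.adjoint_id, map_smulₛₗ]
  rw [← hadj, ContinuousLinearMap.range_eq_orthogonal_ker_adjoint_of_isClosed _
    (hK.smul μ).isClosed_range_id_sub, Submodule.mem_orthogonal']
end

section
/- Let H be a Hilbert space, K : H → H a compact linear operator, and μ ∈ ℂ. Then dim N(I - μK) = dim N(I - conj(μ)K*), i.e., the dimensions of the null spaces of I - μK and of its adjoint are equal (and finite). -/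
/-!
Approximate the compact operator `A = μ • K` to within `1` by a finite-rank `B`; then
`u = 1 - (A - B)` is invertible and `1 - A = u * (1 - G)` with `G = u⁻¹ * B` of finite rank.
Multiplying by a unit changes neither the kernel of `1 - G` nor, up to isomorphism, that of its
adjoint `(1 - G)† * u†`. Both kernels of `1 - G` and `1 - G†` lie in the finite-dimensional space
`W = ran G + ran G†`, which both operators preserve and on which they are mutually adjoint, so
rank–nullity and `rank T = rank T†` in finite dimension give the equality.
-/

open ContinuousLinearMap Module

section Module

variable {R M : Type*} [Ring R] [AddCommGroup M] [Module R M]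

theorem LinearMap.finrank_ker_restrict_of_ker_le {f : M →ₗ[R] M} {W : Submodule R M}
    (hf : ∀ x ∈ W, f x ∈ W) (hker : f.ker ≤ W) :
    finrank R (f.restrict hf).ker = finrank R f.ker := by
  rw [LinearMap.ker_restrict]
  exact (Submodule.comapSubtypeEquivOfLe hker).finrank_eq

variable [TopologicalSpace M]

theorem ContinuousLinearMap.ker_units_mul (u : (M →L[R] M)ˣ) (S : M →L[R] M) :
    (u * S : M →L[R] M).ker = S.ker := by
  ext x
  simp only [LinearMap.mem_ker, coe_coe]
  exact map_eq_zero_iff _ (ContinuousLinearEquiv.ofUnit u).injective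

def ContinuousLinearMap.kerEquivKerMulUnits (S : M →L[R] M) (u : (M →L[R] M)ˣ) :
    S.ker ≃ₗ[R] (S * u : M →L[R] M).ker :=
  LinearEquiv.ofSubmodules (ContinuousLinearEquiv.ofUnit u).symm.toLinearEquiv _ _ <| by
    rw [Submodule.map_equiv_eq_comap_symm]
    rfl

variable [IsTopologicalAddGroup M]

theorem ContinuousLinearMap.ker_one_sub_le_range (S : M →L[R] M) : (1 - S).ker ≤ S.range := by
  intro x hx
  rw [LinearMap.mem_ker, coe_coe, sub_apply, one_apply_eq_self, sub_eq_zero] at hx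
  exact ⟨x, hx.symm⟩

theorem ContinuousLinearMap.one_sub_apply_mem_of_range_le {S : M →L[R] M} {W : Submodule R M}
    (hS : S.range ≤ W) : ∀ x ∈ W, (1 - S) x ∈ W :=
  fun x hx ↦ W.sub_mem hx (hS (LinearMap.mem_range_self _ x))

end Module

section InnerProductSpace

variable {𝕜 E F : Type*} [RCLike 𝕜]
  [NormedAddCommGroup E] [InnerProductSpace 𝕜 E] [NormedAddCommGroup F] [InnerProductSpace 𝕜 F]

theorem Submodule.hasFiniteRange_starProjection (U : Submodule 𝕜 E) [FiniteDimensional 𝕜 U] :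
    (U.starProjection : E →ₗ[𝕜] E).HasFiniteRange := by
  rw [LinearMap.HasFiniteRange, range_starProjection]
  exact .of_finite

theorem Submodule.norm_sub_starProjection_le (U : Submodule 𝕜 E) [U.HasOrthogonalProjection]
    (x : E) {y : E} (hy : y ∈ U) : ‖x - U.starProjection x‖ ≤ ‖x - y‖ := by
  rw [starProjection_minimal]
  exact ciInf_le ⟨0, Set.forall_mem_range.mpr fun _ ↦ norm_nonneg _⟩ (⟨y, hy⟩ : U)

theorem IsCompactOperator.exists_hasFiniteRange_norm_sub_lt {A : E →L[𝕜] F}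
    (hA : IsCompactOperator A) {ε : ℝ} (hε : 0 < ε) :
    ∃ B : E →L[𝕜] F, (B : E →ₗ[𝕜] F).HasFiniteRange ∧ ‖A - B‖ < ε := by
  obtain ⟨C, hC, hAC⟩ := hA.image_closedBall_subset_compact 1
  obtain ⟨t, -, ht, hCt⟩ := hC.finite_cover_balls (half_pos hε)
  let Y := Submodule.span 𝕜 t
  have : FiniteDimensional 𝕜 Y := .span_of_finite 𝕜 ht
  refine ⟨Y.starProjection ∘L A, Y.hasFiniteRange_starProjection.comp_right (A : E →ₗ[𝕜] F), ?_⟩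
  refine (opNorm_le_of_unit_norm (half_pos hε).le fun x hx ↦ ?_).trans_lt (half_lt_self hε)
  obtain ⟨y, hyt, hy⟩ := Set.mem_iUnion₂.mp (hCt (hAC ⟨x, by simp [hx], rfl⟩))
  calc ‖(A - Y.starProjection ∘L A) x‖ = ‖A x - Y.starProjection (A x)‖ := rfl
    _ ≤ ‖A x - y‖ := Y.norm_sub_starProjection_le (A x) (Submodule.subset_span hyt)
    _ ≤ ε / 2 := (mem_ball_iff_norm.mp hy).le

theorem LinearMap.HasFiniteRange.adjoint [CompleteSpace E] [CompleteSpace F]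
    {B : E →L[𝕜] F} (hB : (B : E →ₗ[𝕜] F).HasFiniteRange) :
    ((ContinuousLinearMap.adjoint B : F →L[𝕜] E) : F →ₗ[𝕜] E).HasFiniteRange := by
  have : FiniteDimensional 𝕜 B.range := .of_fg hB
  have hPB : B.range.starProjection ∘L B = B := by
    ext x
    exact Submodule.starProjection_eq_self_iff.mpr (LinearMap.mem_range_self _ x)
  rw [← hPB, ContinuousLinearMap.adjoint_comp, (isSelfAdjoint_starProjection _).adjoint_eq]
  exact (Submodule.hasFiniteRange_starProjection _).comp_left _

theorem LinearMap.finrank_ker_adjoint [FiniteDimensional 𝕜 E] (T : E →ₗ[𝕜] E) :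
    finrank 𝕜 (LinearMap.adjoint T).ker = finrank 𝕜 T.ker := by
  have := T.finrank_range_add_finrank_ker
  have := (LinearMap.adjoint T).finrank_range_add_finrank_ker
  have := T.finrank_range_adjoint
  omega

section Complete

variable [CompleteSpace E]

theorem ContinuousLinearMap.adjoint_restrict {T : E →L[𝕜] E} {W : Submodule 𝕜 E}
    [FiniteDimensional 𝕜 W] (hT : ∀ x ∈ W, T x ∈ W) (hT' : ∀ x ∈ W, adjoint T x ∈ W) :
    LinearMap.adjoint ((T : E →ₗ[𝕜] E).restrict hT) = (adjoint T : E →ₗ[𝕜] E).restrict hT' := by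
  symm
  rw [LinearMap.eq_adjoint_iff]
  intro x y
  simp [adjoint_inner_left]

theorem ContinuousLinearMap.finrank_ker_adjoint_of_mapsTo {T : E →L[𝕜] E} {W : Submodule 𝕜 E}
    [FiniteDimensional 𝕜 W] (hT : ∀ x ∈ W, T x ∈ W) (hT' : ∀ x ∈ W, adjoint T x ∈ W)
    (hker : T.ker ≤ W) (hker' : (adjoint T).ker ≤ W) :
    finrank 𝕜 (adjoint T).ker = finrank 𝕜 T.ker := by
  rw [← LinearMap.finrank_ker_restrict_of_ker_le hT hker,
    ← LinearMap.finrank_ker_restrict_of_ker_le hT' hker', ← adjoint_restrict hT,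
    LinearMap.finrank_ker_adjoint]

theorem ContinuousLinearMap.finrank_ker_one_sub_eq_adjoint_of_hasFiniteRange {G : E →L[𝕜] E}
    (hG : (G : E →ₗ[𝕜] E).HasFiniteRange) :
    FiniteDimensional 𝕜 (1 - G).ker ∧ FiniteDimensional 𝕜 (adjoint (1 - G)).ker ∧
      finrank 𝕜 (1 - G).ker = finrank 𝕜 (adjoint (1 - G)).ker := by
  let W := G.range ⊔ (adjoint G).range
  have : FiniteDimensional 𝕜 W := .of_fg (hG.sup hG.adjoint)
  have hadj : adjoint (1 - G) = 1 - adjoint G := by rw [map_sub, ← star_eq_adjoint, star_one]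
  have hker : (1 - G).ker ≤ W := (ker_one_sub_le_range G).trans le_sup_left
  have hker' : (adjoint (1 - G)).ker ≤ W := hadj ▸ (ker_one_sub_le_range _).trans le_sup_right
  refine ⟨Submodule.finiteDimensional_of_le hker, Submodule.finiteDimensional_of_le hker', ?_⟩
  exact (finrank_ker_adjoint_of_mapsTo (one_sub_apply_mem_of_range_le le_sup_left)
    (hadj ▸ one_sub_apply_mem_of_range_le le_sup_right) hker hker').symm

theorem ContinuousLinearMap.finrank_ker_units_mul_eq_adjoint (u : (E →L[𝕜] E)ˣ) {S : E →L[𝕜] E}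
    (h : FiniteDimensional 𝕜 S.ker ∧ FiniteDimensional 𝕜 (adjoint S).ker ∧
      finrank 𝕜 S.ker = finrank 𝕜 (adjoint S).ker) :
    FiniteDimensional 𝕜 (u * S : E →L[𝕜] E).ker ∧
      FiniteDimensional 𝕜 (adjoint (u * S : E →L[𝕜] E)).ker ∧
      finrank 𝕜 (u * S : E →L[𝕜] E).ker = finrank 𝕜 (adjoint (u * S : E →L[𝕜] E)).ker := by
  obtain ⟨hS, hS', hrank⟩ := h
  have hadj : adjoint (u * S : E →L[𝕜] E) = adjoint S * ↑(star u) := by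
    rw [← star_eq_adjoint, star_mul, Units.coe_star, star_eq_adjoint]
  let e := kerEquivKerMulUnits (adjoint S) (star u)
  rw [hadj, ker_units_mul]
  exact ⟨hS, e.finiteDimensional, hrank.trans e.finrank_eq⟩

theorem IsCompactOperator.exists_units_mul_one_sub {A : E →L[𝕜] E} (hA : IsCompactOperator A) :
    ∃ (u : (E →L[𝕜] E)ˣ) (G : E →L[𝕜] E),
      (G : E →ₗ[𝕜] E).HasFiniteRange ∧ 1 - A = u * (1 - G) := by
  obtain ⟨B, hB, hAB⟩ := hA.exists_hasFiniteRange_norm_sub_lt one_pos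
  let u := Units.oneSub (A - B) hAB
  refine ⟨u, ↑u⁻¹ * B, hB.comp_left _, ?_⟩
  rw [mul_sub, mul_one, ← mul_assoc, u.mul_inv, one_mul, Units.val_oneSub]
  abel

theorem IsCompactOperator.finrank_ker_one_sub_eq_adjoint {A : E →L[𝕜] E}
    (hA : IsCompactOperator A) :
    FiniteDimensional 𝕜 (1 - A).ker ∧ FiniteDimensional 𝕜 (adjoint (1 - A)).ker ∧
      finrank 𝕜 (1 - A).ker = finrank 𝕜 (adjoint (1 - A)).ker := by
  obtain ⟨u, G, hG, hAG⟩ := hA.exists_units_mul_one_sub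
  rw [hAG]
  exact finrank_ker_units_mul_eq_adjoint u (finrank_ker_one_sub_eq_adjoint_of_hasFiniteRange hG)

end Complete

end InnerProductSpace

/-- Fredholm alternative: the null spaces of `I - μK` and of its adjoint
`I - conj(μ)K*` are finite dimensional of equal dimension. -/
theorem fredholm_kernel_dim_eq_adjoint_kernel_dim
    {H : Type*} [NormedAddCommGroup H] [InnerProductSpace ℂ H] [CompleteSpace H]
    (K : H →L[ℂ] H) (hK : IsCompactOperator K) (μ : ℂ) :
    FiniteDimensional ℂ (LinearMap.ker
      (((ContinuousLinearMap.id ℂ H - μ • K : H →L[ℂ] H) : H →ₗ[ℂ] H))) ∧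
    FiniteDimensional ℂ (LinearMap.ker
      (((ContinuousLinearMap.id ℂ H - (starRingEnd ℂ μ) • ContinuousLinearMap.adjoint K :
        H →L[ℂ] H) : H →ₗ[ℂ] H))) ∧
    Module.finrank ℂ (LinearMap.ker
      (((ContinuousLinearMap.id ℂ H - μ • K : H →L[ℂ] H) : H →ₗ[ℂ] H))) =
      Module.finrank ℂ (LinearMap.ker
        (((ContinuousLinearMap.id ℂ H - (starRingEnd ℂ μ) • ContinuousLinearMap.adjoint K :
          H →L[ℂ] H) : H →ₗ[ℂ] H))) := by
  have hadj : ContinuousLinearMap.id ℂ H - starRingEnd ℂ μ • adjoint K =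
      adjoint (ContinuousLinearMap.id ℂ H - μ • K) := by
    rw [map_sub, map_smulₛₗ, adjoint_id]
  rw [hadj]
  exact (hK.smul μ).finrank_ker_one_sub_eq_adjoint
end

section
/- Under the hypotheses of the Volterra theorem, the iterates u_1 = f, u_{n+1} = μ V u_n + f converge uniformly on [a,b] to the unique solution u of u = μVu + f. -/
open MeasureTheory intervalIntegral

/-- The Picard iterates for the Volterra equation: `u₁ = f`,
`u_{n+1}(x) = μ ∫_a^x K(x,y) u_n(y) dy + f(x)`. -/
noncomputable def volterraIter (K : ℝ × ℝ → ℂ) (μ : ℂ) (f : ℝ → ℂ) (a : ℝ) :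
    ℕ → ℝ → ℂ
  | 0 => f
  | n + 1 => fun x => μ * (∫ y in a..x, K (x, y) * volterraIter K μ f a n y) + f x

/-!
Let `eₙ = uₙ - u`. Subtracting the equation for `u` from the recursion gives
`eₙ₊₁(x) = μ ∫_a^x K(x,y) eₙ(y) dy`, so with `‖K‖ ≤ M` on the triangle and `‖e₀‖ ≤ C` on `[a,b]`,
induction yields `‖eₙ(x)‖ ≤ C (‖μ‖ M (x - a))ⁿ / n!`, which tends to `0` uniformly in `x`.
Integrability of the iterates comes from their continuity, which is proved by extending `K` and
`uₙ` continuously to the whole plane and line (Tietze).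
-/

open Filter Topology Set
open scoped Nat

universe u v

theorem ContinuousOn.exists_continuous_eqOn {X : Type u} {Y : Type v} [TopologicalSpace X]
    [NormalSpace X] [TopologicalSpace Y] [TietzeExtension.{u, v} Y] {s : Set X} {f : X → Y}
    (hs : IsClosed s) (hf : ContinuousOn f s) : ∃ g : X → Y, Continuous g ∧ EqOn g f s := by
  obtain ⟨g, hg⟩ := ContinuousMap.exists_restrict_eq hs ⟨s.domRestrict f, hf.domRestrict⟩
  exact ⟨g, g.continuous, fun x hx => congrArg (· ⟨x, hx⟩) hg⟩

theorem tendstoUniformlyOn_of_norm_sub_le {ι α E : Type*} [SeminormedAddCommGroup E]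
    {F : ι → α → E} {f : α → E} {l : Filter ι} {s : Set α} {ε : ι → ℝ}
    (hε : Tendsto ε l (𝓝 0)) (h : ∀ᶠ n in l, ∀ x ∈ s, ‖F n x - f x‖ ≤ ε n) :
    TendstoUniformlyOn F f l s := by
  refine Metric.tendstoUniformlyOn_iff.mpr fun δ hδ => ?_
  filter_upwards [h, hε.eventually_lt_const hδ] with n hn hεn x hx
  rw [dist_comm, dist_eq_norm]
  exact (hn x hx).trans_lt hεn

theorem integral_sub_pow_div_factorial (a x : ℝ) (n : ℕ) :
    ∫ y in a..x, (y - a) ^ n / n ! = (x - a) ^ (n + 1) / (n + 1)! := by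
  rw [intervalIntegral.integral_div, intervalIntegral.integral_comp_sub_right (· ^ n), integral_pow,
    Nat.factorial_succ]
  push_cast
  field_simp
  ring

theorem norm_integral_mul_le_of_le_pow_div_factorial {A : Type*} [NormedRing A] [NormedSpace ℝ A]
    {k g : ℝ → A} {a x M C : ℝ} {n : ℕ} (hax : a ≤ x) (hk : ∀ y ∈ Icc a x, ‖k y‖ ≤ M)
    (hg : ∀ y ∈ Icc a x, ‖g y‖ ≤ C * ((y - a) ^ n / n !)) :
    ‖∫ y in a..x, k y * g y‖ ≤ M * C * ((x - a) ^ (n + 1) / (n + 1)!) := by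
  have hM : 0 ≤ M := (norm_nonneg _).trans (hk a ⟨le_rfl, hax⟩)
  calc ‖∫ y in a..x, k y * g y‖ ≤ ∫ y in a..x, M * (C * ((y - a) ^ n / n !)) := by
        refine norm_integral_le_of_norm_le hax (ae_of_all _ fun y hy => ?_)
          (Continuous.intervalIntegrable (by fun_prop) _ _)
        exact (norm_mul_le _ _).trans
          (mul_le_mul (hk y (Ioc_subset_Icc_self hy)) (hg y (Ioc_subset_Icc_self hy))
            (norm_nonneg _) hM)
    _ = M * C * ((x - a) ^ (n + 1) / (n + 1)!) := by
        rw [intervalIntegral.integral_const_mul, intervalIntegral.integral_const_mul,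
          integral_sub_pow_div_factorial, mul_assoc]

def volterraTriangle (a b : ℝ) : Set (ℝ × ℝ) := {p | a ≤ p.2 ∧ p.2 ≤ p.1 ∧ p.1 ≤ b}

namespace volterraTriangle

theorem isClosed (a b : ℝ) : IsClosed (volterraTriangle a b) :=
  (isClosed_le continuous_const continuous_snd).inter
    ((isClosed_le continuous_snd continuous_fst).inter
      (isClosed_le continuous_fst continuous_const))

theorem isCompact (a b : ℝ) : IsCompact (volterraTriangle a b) :=
  (isCompact_Icc.prod isCompact_Icc).of_isClosed_subset (isClosed a b)
    fun _ ⟨h₁, h₂, h₃⟩ => ⟨⟨h₁.trans h₂, h₃⟩, h₁, h₂.trans h₃⟩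

theorem mk_mem {a b x y : ℝ} (hx : x ∈ Icc a b) (hy : y ∈ Icc a x) :
    (x, y) ∈ volterraTriangle a b :=
  ⟨hy.1, hy.2, hx.2⟩

end volterraTriangle

section Volterra

variable {a b : ℝ} {K : ℝ × ℝ → ℂ} {g : ℝ → ℂ}

theorem intervalIntegrable_kernel_mul (hK : ContinuousOn K (volterraTriangle a b))
    (hg : ContinuousOn g (Icc a b)) {x : ℝ} (hx : x ∈ Icc a b) :
    IntervalIntegrable (fun y => K (x, y) * g y) volume a x := by
  refine ContinuousOn.intervalIntegrable ?_
  rw [uIcc_of_le hx.1]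
  exact (hK.comp (continuousOn_const.prodMk continuousOn_id) fun y hy =>
    volterraTriangle.mk_mem hx hy).mul (hg.mono (Icc_subset_Icc_right hx.2))

theorem continuousOn_integral_kernel_mul (hK : ContinuousOn K (volterraTriangle a b))
    (hg : ContinuousOn g (Icc a b)) :
    ContinuousOn (fun x => ∫ y in a..x, K (x, y) * g y) (Icc a b) := by
  obtain ⟨K', hK'c, hK'⟩ := hK.exists_continuous_eqOn (volterraTriangle.isClosed a b)
  obtain ⟨g', hg'c, hg'⟩ := hg.exists_continuous_eqOn isClosed_Icc
  have hcont : Continuous fun x => ∫ y in a..x, K' (x, y) * g' y :=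
    continuous_parametric_intervalIntegral_of_continuous (f := fun x y => K' (x, y) * g' y)
      (hK'c.mul (hg'c.comp continuous_snd)) continuous_id
  refine hcont.continuousOn.congr fun x hx => integral_congr fun y hy => ?_
  rw [uIcc_of_le hx.1] at hy
  simp only [hK' (volterraTriangle.mk_mem hx hy), hg' (Icc_subset_Icc_right hx.2 hy)]

variable {μ : ℂ} {f u : ℝ → ℂ}

theorem continuousOn_volterraIter (hK : ContinuousOn K (volterraTriangle a b))
    (hf : ContinuousOn f (Icc a b)) : ∀ n, ContinuousOn (volterraIter K μ f a n) (Icc a b)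
  | 0 => hf
  | n + 1 =>
    (continuousOn_const.mul
      (continuousOn_integral_kernel_mul hK (continuousOn_volterraIter hK hf n))).add hf

theorem volterraIter_succ_sub (hK : ContinuousOn K (volterraTriangle a b))
    (hf : ContinuousOn f (Icc a b)) (hu : ContinuousOn u (Icc a b))
    (hueq : ∀ x ∈ Icc a b, u x = μ * (∫ y in a..x, K (x, y) * u y) + f x)
    (n : ℕ) {x : ℝ} (hx : x ∈ Icc a b) :
    volterraIter K μ f a (n + 1) x - u x
      = μ * ∫ y in a..x, K (x, y) * (volterraIter K μ f a n y - u y) := by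
  simp only [mul_sub]
  rw [hueq x hx, volterraIter, integral_sub
    (intervalIntegrable_kernel_mul hK (continuousOn_volterraIter hK hf n) hx)
    (intervalIntegrable_kernel_mul hK hu hx)]
  ring

theorem norm_volterraIter_sub_le (hK : ContinuousOn K (volterraTriangle a b))
    (hf : ContinuousOn f (Icc a b)) (hu : ContinuousOn u (Icc a b))
    (hueq : ∀ x ∈ Icc a b, u x = μ * (∫ y in a..x, K (x, y) * u y) + f x)
    {M C : ℝ} (hM : ∀ p ∈ volterraTriangle a b, ‖K p‖ ≤ M)
    (hC : ∀ x ∈ Icc a b, ‖f x - u x‖ ≤ C) (n : ℕ) {x : ℝ} (hx : x ∈ Icc a b) :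
    ‖volterraIter K μ f a n x - u x‖ ≤ C * (‖μ‖ * M) ^ n * ((x - a) ^ n / n !) := by
  induction n generalizing x with
  | zero => simpa [volterraIter] using hC x hx
  | succ n ih =>
    have hint := norm_integral_mul_le_of_le_pow_div_factorial hx.1
      (fun y hy => hM _ (volterraTriangle.mk_mem hx hy))
      (fun y hy => ih (Icc_subset_Icc_right hx.2 hy))
    rw [volterraIter_succ_sub hK hf hu hueq n hx, norm_mul]
    calc ‖μ‖ * ‖∫ y in a..x, K (x, y) * (volterraIter K μ f a n y - u y)‖
        ≤ ‖μ‖ * (M * (C * (‖μ‖ * M) ^ n) * ((x - a) ^ (n + 1) / (n + 1)!)) :=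
          mul_le_mul_of_nonneg_left hint (norm_nonneg μ)
      _ = C * (‖μ‖ * M) ^ (n + 1) * ((x - a) ^ (n + 1) / (n + 1)!) := by ring

end Volterra

theorem volterra_iterates_converge_uniformly_general
    (a b : ℝ) (K : ℝ × ℝ → ℂ)
    (hK : ContinuousOn K {p : ℝ × ℝ | a ≤ p.2 ∧ p.2 ≤ p.1 ∧ p.1 ≤ b})
    (μ : ℂ) (f : ℝ → ℂ) (hf : ContinuousOn f (Set.Icc a b))
    (u : ℝ → ℂ) (hu : ContinuousOn u (Set.Icc a b))
    (hueq : ∀ x ∈ Set.Icc a b, u x = μ * (∫ y in a..x, K (x, y) * u y) + f x) :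
    TendstoUniformlyOn (volterraIter K μ f a) u Filter.atTop (Set.Icc a b) := by
  obtain ⟨M, hM⟩ := (volterraTriangle.isCompact a b).exists_bound_of_continuousOn hK
  obtain ⟨C, hC⟩ := isCompact_Icc.exists_bound_of_continuousOn (hf.sub hu)
  have hlim := (FloorSemiring.tendsto_pow_div_factorial_atTop (‖μ‖ * M * (b - a))).const_mul C
  rw [mul_zero] at hlim
  refine tendstoUniformlyOn_of_norm_sub_le hlim (Eventually.of_forall fun n x hx => ?_)
  have hM0 : 0 ≤ ‖μ‖ * M := mul_nonneg (norm_nonneg μ)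
    ((norm_nonneg _).trans (hM _ (volterraTriangle.mk_mem hx ⟨hx.1, le_rfl⟩)))
  have hC0 : 0 ≤ C := (norm_nonneg _).trans (hC x hx)
  calc ‖volterraIter K μ f a n x - u x‖ ≤ C * (‖μ‖ * M) ^ n * ((x - a) ^ n / n !) :=
        norm_volterraIter_sub_le hK hf hu hueq hM hC n hx
    _ = C * ((‖μ‖ * M * (x - a)) ^ n / n !) := by rw [mul_pow (‖μ‖ * M) (x - a)]; ring
    _ ≤ C * ((‖μ‖ * M * (b - a)) ^ n / n !) := by
        gcongr
        · exact mul_nonneg hM0 (sub_nonneg.mpr hx.1)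
        · exact hx.2

/-- The Volterra iterates `u₁ = f`, `u_{n+1} = μ V u_n + f` converge uniformly on
`[a,b]` to the solution `u` of `u = μ V u + f`. -/
theorem volterra_iterates_converge_uniformly
    (a b : ℝ) (hab : a < b) (K : ℝ × ℝ → ℂ)
    (hK : ContinuousOn K {p : ℝ × ℝ | a ≤ p.2 ∧ p.2 ≤ p.1 ∧ p.1 ≤ b})
    (μ : ℂ) (f : ℝ → ℂ) (hf : ContinuousOn f (Set.Icc a b))
    (u : ℝ → ℂ) (hu : ContinuousOn u (Set.Icc a b))
    (hueq : ∀ x ∈ Set.Icc a b, u x = μ * (∫ y in a..x, K (x, y) * u y) + f x) :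
    TendstoUniformlyOn (volterraIter K μ f a) u Filter.atTop (Set.Icc a b) :=
  volterra_iterates_converge_uniformly_general a b K hK μ f hf u hu hueq
end

section
/- Let K be a normal cone in a Banach space X in which every norm-bounded monotone increasing sequence converges, and let A : X → X be a monotone (order-preserving) operator leaving K invariant. Suppose there exist v, w ∈ K with v ≤ w, Av ≥ v, and Aw ≤ w, and A is continuous. Then there exists u ∈ K with v ≤ u ≤ w and A u = u. -/
open Filter

/-- Existence of a fixed point for a monotone operator between sub- and super-solutions
in a normal cone in which monotone order-bounded sequences converge. -/
theorem fixed_point_between_sub_and_super_solutions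
    {X : Type*} [NormedAddCommGroup X] [NormedSpace ℝ X] [CompleteSpace X]
    (K : Set X) (hclosed : IsClosed K) (hconv : Convex ℝ K)
    (hsmul : ∀ u ∈ K, ∀ t : ℝ, 0 ≤ t → t • u ∈ K)
    (hpointed : ∀ u : X, u ∈ K → -u ∈ K → u = 0)
    (c : ℝ) (hc : 0 < c)
    (hnormal : ∀ u v : X, u ∈ K → v - u ∈ K → ‖u‖ ≤ c * ‖v‖)
    (hmonconv : ∀ (useq : ℕ → X) (w' : X), (∀ n, useq n ∈ K) →
      (∀ n, useq (n + 1) - useq n ∈ K) → (∀ n, w' - useq n ∈ K) →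
      ∃ l : X, Tendsto useq atTop (nhds l))
    (A : X → X) (hcont : Continuous A) (hAK : ∀ u ∈ K, A u ∈ K)
    (hmono : ∀ u v : X, v - u ∈ K → A v - A u ∈ K)
    (v w : X) (hv : v ∈ K) (hw : w ∈ K) (hvw : w - v ∈ K)
    (hAv : A v - v ∈ K) (hAw : w - A w ∈ K) :
    ∃ u ∈ K, u - v ∈ K ∧ w - u ∈ K ∧ A u = u := by
  -- K is closed under addition
  have hadd : ∀ x ∈ K, ∀ y ∈ K, x + y ∈ K := by
    intro x hx y hy
    have h := hconv hx hy (by norm_num : (0:ℝ) ≤ 1/2) (by norm_num : (0:ℝ) ≤ 1/2) (by norm_num)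
    have h2 := hsmul _ h 2 (by norm_num)
    have : (2:ℝ) • ((1/2 : ℝ) • x + (1/2 : ℝ) • y) = x + y := by
      rw [smul_add, smul_smul, smul_smul]; norm_num
    rwa [this] at h2
  set u : ℕ → X := fun n => A^[n] v with hu
  have hstep : ∀ n, u (n + 1) = A (u n) := fun n => Function.iterate_succ_apply' A n v
  have hK : ∀ n, u n ∈ K := by
    intro n; induction n with
    | zero => exact hv
    | succ n ih => rw [hstep]; exact hAK _ ih
  have hinc : ∀ n, u (n + 1) - u n ∈ K := by
    intro n; induction n with
    | zero => simpa [hu] using hAv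
    | succ n ih =>
      rw [hstep, hstep]
      rw [hstep] at ih
      exact hmono _ _ ih
  have hbd : ∀ n, w - u n ∈ K := by
    intro n; induction n with
    | zero => simpa [hu] using hvw
    | succ n ih =>
      have h1 : A w - A (u n) ∈ K := hmono _ _ ih
      have := hadd _ hAw _ h1
      have heq : w - A w + (A w - A (u n)) = w - u (n+1) := by rw [hstep]; abel
      rwa [heq] at this
  obtain ⟨l, hl⟩ := hmonconv u w hK hinc hbd
  have hlK : l ∈ K := hclosed.mem_of_tendsto hl (Eventually.of_forall hK)
  -- l - u n ∈ K for each n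
  have hchain : ∀ n m, u (n + m) - u n ∈ K := by
    intro n m; induction m with
    | zero =>
      have h0 := hsmul _ hv 0 le_rfl
      simpa using h0
    | succ m ih =>
      have := hadd _ (hinc (n + m)) _ ih
      have heq : u (n + m + 1) - u (n + m) + (u (n + m) - u n) = u (n + (m+1)) - u n := by
        ring_nf; abel
      rwa [heq] at this
  have hge : ∀ n, l - u n ∈ K := by
    intro n
    have htend : Tendsto (fun m => u m - u n) atTop (nhds (l - u n)) :=
      hl.sub tendsto_const_nhds
    refine hclosed.mem_of_tendsto htend ?_
    filter_upwards [eventually_ge_atTop n] with m hm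
    obtain ⟨k, rfl⟩ := Nat.exists_eq_add_of_le hm
    exact hchain n k
  have hle : w - l ∈ K := by
    have htend : Tendsto (fun n => w - u n) atTop (nhds (w - l)) :=
      tendsto_const_nhds.sub hl
    exact hclosed.mem_of_tendsto htend (Eventually.of_forall hbd)
  have hfix : A l = l := by
    have h1 : Tendsto (fun n => A (u n)) atTop (nhds (A l)) := (hcont.tendsto l).comp hl
    have h2 : Tendsto (fun n => u (n + 1)) atTop (nhds l) := hl.comp (tendsto_add_atTop_nat 1)
    have : (fun n => u (n+1)) = fun n => A (u n) := funext hstep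
    rw [this] at h2
    exact tendsto_nhds_unique h1 h2
  exact ⟨l, hlK, by simpa [hu] using hge 0, hle, hfix⟩
end

section
/- Let H be a Hilbert space, K : H → H compact with N(I - K) = {0}, and let {L_n} be an increasing sequence of finite-dimensional subspaces that is limit dense in H (ρ(f, L_n) → 0 for every f ∈ H), with P_n the orthogonal projection onto L_n. Then for all sufficiently large n the projected equation P_n(I - K)P_n u_n = P_n f has a unique solution u_n ∈ L_n, and ‖u_n - u‖ → 0 where u is the unique solution of u = Ku + f. -/
/-!
By the Fredholm alternative `1 - K` is invertible. The projections `Pₙ` have norm at most one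
and converge strongly to the identity; since `K` maps the unit ball into a compact set, on which
strong convergence of an equicontinuous family is uniform, `Pₙ K → K` in operator norm. Hence
`1 - Pₙ K → 1 - K` in norm, and as invertibility is an open condition and inversion is
continuous, `1 - Pₙ K` is invertible for large `n` and
`uₙ = (1 - Pₙ K)⁻¹ Pₙ f → (1 - K)⁻¹ f = u`. Finally, the projected equation
`Pₙ (uₙ - K uₙ) = Pₙ f` with `uₙ ∈ Lₙ` is equivalent to `uₙ - Pₙ K uₙ = Pₙ f`, whose solutions
lie in `Lₙ` automatically.
-/

open Filter Topology Metric
open scoped InnerProductSpace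

theorem IsCompact.tendstoUniformlyOn_of_equicontinuousOn {ι X α : Type*} [TopologicalSpace X]
    [UniformSpace α] {F : ι → X → α} {f : X → α} {l : Filter ι} {S : Set X} (hS : IsCompact S)
    (hF : EquicontinuousOn F S) (h : ∀ x ∈ S, Tendsto (F · x) l (𝓝 (f x))) :
    TendstoUniformlyOn F f l S := by
  have : CompactSpace S := isCompact_iff_compactSpace.mp hS
  rw [tendstoUniformlyOn_iff_tendstoUniformly_comp_coe]
  exact UniformFun.tendsto_iff_tendstoUniformly.1 <|
    ((equicontinuous_restrict_iff F).mpr hF).tendsto_uniformFun_iff_pi l _ |>.mpr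
      (tendsto_pi_nhds.2 fun x => h x x.2)

theorem IsCompactOperator.isUnit_one_sub {𝕜 X : Type*} [NontriviallyNormedField 𝕜]
    [NormedAddCommGroup X] [NormedSpace 𝕜 X] [CompleteSpace X] {K : X →L[𝕜] X}
    (hK : IsCompactOperator K) (hfix : ∀ x, K x = x → x = 0) : IsUnit (1 - K) := by
  have hres := (hK.hasEigenvalue_or_mem_resolventSet one_ne_zero).resolve_left fun hev => by
    obtain ⟨x, hx, hx0⟩ := hev.exists_hasEigenvector
    exact hx0 (hfix x (by simpa using Module.End.mem_eigenspace_iff.1 hx))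
  simpa [spectrum.mem_resolventSet_iff] using hres

namespace ContinuousLinearMap

section Compact

variable {𝕜 E F G : Type*} [RCLike 𝕜] [NormedAddCommGroup E] [NormedSpace 𝕜 E]
  [NormedAddCommGroup F] [NormedSpace 𝕜 F] [NormedAddCommGroup G] [NormedSpace 𝕜 G]

theorem tendsto_comp_of_isCompactOperator {ι : Type*} {l : Filter ι} {A : ι → F →L[𝕜] G}
    {B : F →L[𝕜] G} (hA : ∃ C, ∀ i, ‖A i‖ ≤ C) (hAB : ∀ y, Tendsto (fun i => A i y) l (𝓝 (B y)))
    {K : E →L[𝕜] F} (hK : IsCompactOperator K) :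
    Tendsto (fun i => (A i).comp K) l (𝓝 (B.comp K)) := by
  obtain ⟨S, hS, hKS⟩ := hK.image_closedBall_subset_compact 1
  have hequi : Equicontinuous (fun i => ⇑(A i)) :=
    ((NormedSpace.equicontinuous_TFAE A).out 5 1).mp hA
  have hunif :=
    hS.tendstoUniformlyOn_of_equicontinuousOn (hequi.equicontinuousOn S) fun y _ => hAB y
  refine Metric.tendsto_nhds.2 fun ε hε => ?_
  filter_upwards [Metric.tendstoUniformlyOn_iff.1 hunif (ε / 2) (half_pos hε)] with i hi
  rw [dist_eq_norm]
  refine (opNorm_le_of_unit_norm (half_pos hε).le fun x hx => ?_).trans_lt (half_lt_self hε)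
  rw [sub_apply, comp_apply, comp_apply, ← dist_eq_norm, dist_comm]
  exact (hi _ (hKS ⟨x, by simp [hx], rfl⟩)).le

end Compact

section Inverse

variable {𝕜 E : Type*} [NontriviallyNormedField 𝕜] [NormedAddCommGroup E] [NormedSpace 𝕜 E]

theorem eq_ring_inverse_apply {T : E →L[𝕜] E} (hT : IsUnit T) {w y : E} (h : T w = y) :
    w = Ring.inverse T y := by
  rw [← h, ← mul_apply_eq_comp, Ring.inverse_mul_cancel _ hT, one_apply_eq_self]

theorem tendsto_ring_inverse_apply [CompleteSpace E] {ι : Type*} {l : Filter ι}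
    {T : ι → E →L[𝕜] E} {T₀ : E →L[𝕜] E} (hT₀ : IsUnit T₀) (hT : Tendsto T l (𝓝 T₀))
    {y : ι → E} {y₀ : E} (hy : Tendsto y l (𝓝 y₀)) :
    Tendsto (fun i => Ring.inverse (T i) (y i)) l (𝓝 (Ring.inverse T₀ y₀)) :=
  (isBoundedBilinearMap_apply.continuous.tendsto _).comp <|
    ((NormedRing.inverse_continuousAt hT₀.unit).tendsto.comp hT).prodMk_nhds hy

end Inverse

end ContinuousLinearMap

namespace Submodule

variable {𝕜 E : Type*} [RCLike 𝕜] [NormedAddCommGroup E] [InnerProductSpace 𝕜 E]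
  {U : Submodule 𝕜 E} {P : E →L[𝕜] E}

theorem hasOrthogonalProjection_of_forall_inner_sub_eq_zero
    (hP : ∀ x, P x ∈ U ∧ ∀ y ∈ U, ⟪x - P x, y⟫_𝕜 = 0) : U.HasOrthogonalProjection :=
  ⟨fun x => ⟨P x, (hP x).1, (mem_orthogonal' _ _).2 (hP x).2⟩⟩

theorem eq_starProjection_of_forall_inner_sub_eq_zero [U.HasOrthogonalProjection]
    (hP : ∀ x, P x ∈ U ∧ ∀ y ∈ U, ⟪x - P x, y⟫_𝕜 = 0) : P = U.starProjection :=
  ContinuousLinearMap.ext fun x =>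
    (eq_starProjection_of_mem_orthogonal (hP x).1 ((mem_orthogonal' _ _).2 (hP x).2)).symm

theorem norm_sub_starProjection_eq_infDist [U.HasOrthogonalProjection] (x : E) :
    ‖x - U.starProjection x‖ = infDist x U := by
  rw [starProjection_minimal, infDist_eq_iInf]
  simp only [dist_eq_norm]
  rfl

theorem tendsto_starProjection_apply_of_tendsto_infDist {L : ℕ → Submodule 𝕜 E}
    [∀ n, (L n).HasOrthogonalProjection]
    {x : E} (hx : Tendsto (fun n => infDist x (L n : Set E)) atTop (𝓝 0)) :
    Tendsto (fun n => (L n).starProjection x) atTop (𝓝 x) := by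
  rw [tendsto_iff_norm_sub_tendsto_zero]
  simpa only [norm_sub_rev _ x, norm_sub_starProjection_eq_infDist] using hx

theorem mem_and_starProjection_sub_eq_iff [U.HasOrthogonalProjection] (K : E →L[𝕜] E) (f w : E) :
    (w ∈ U ∧ U.starProjection (w - K w) = U.starProjection f) ↔
      (1 - U.starProjection.comp K) w = U.starProjection f := by
  constructor
  · rintro ⟨hw, hwf⟩
    rwa [map_sub, starProjection_eq_self_iff.2 hw] at hwf
  · intro hwf
    have hw : w ∈ U := by
      have hw_eq : w = U.starProjection f + U.starProjection (K w) := by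
        rw [← hwf]
        simp
      rw [hw_eq]
      exact U.add_mem (starProjection_apply_mem _ _) (starProjection_apply_mem _ _)
    exact ⟨hw, by rwa [map_sub, starProjection_eq_self_iff.2 hw]⟩

end Submodule

theorem projection_method_converges_general
    {H : Type*} [NormedAddCommGroup H] [InnerProductSpace ℂ H] [CompleteSpace H]
    (K : H →L[ℂ] H) (hK : IsCompactOperator K)
    (hinj : ∀ u : H, u = K u → u = 0)
    (L : ℕ → Submodule ℂ H)
    (hdense : ∀ f : H, Tendsto (fun n => Metric.infDist f (L n : Set H)) atTop (nhds 0))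
    (P : ℕ → H →L[ℂ] H)
    (hproj : ∀ (n : ℕ) (x : H), P n x ∈ L n ∧ ∀ y ∈ L n, ⟪x - P n x, y⟫_ℂ = 0)
    (f : H) :
    ∃ u : H, (u = K u + f) ∧
      ∃ Nbig : ℕ,
        (∀ n ≥ Nbig, ∃! w : H, w ∈ L n ∧ P n (w - K w) = P n f) ∧
        ∀ useq : ℕ → H,
          (∀ n ≥ Nbig, useq n ∈ L n ∧ P n (useq n - K (useq n)) = P n f) →
          Tendsto useq atTop (nhds u) := by
  have := fun n => Submodule.hasOrthogonalProjection_of_forall_inner_sub_eq_zero (hproj n)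
  obtain rfl : P = fun n => (L n).starProjection :=
    funext fun n => Submodule.eq_starProjection_of_forall_inner_sub_eq_zero (hproj n)
  have hPx (x : H) := Submodule.tendsto_starProjection_apply_of_tendsto_infDist (hdense x)
  have hT : Tendsto (fun n => 1 - (L n).starProjection.comp K) atTop (𝓝 (1 - K)) := by
    simpa using tendsto_const_nhds.sub <| ContinuousLinearMap.tendsto_comp_of_isCompactOperator
      ⟨1, fun n => Submodule.starProjection_norm_le _⟩ (B := ContinuousLinearMap.id ℂ H) hPx hK
  have hunit : IsUnit (1 - K) := hK.isUnit_one_sub fun x hx => hinj x hx.symm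
  obtain ⟨N, hN⟩ := eventually_atTop.1 (hT (Units.nhds hunit.unit))
  obtain ⟨u, hu⟩ := (ContinuousLinearMap.isUnit_iff_bijective.1 hunit).2 f
  refine ⟨u, eq_add_of_sub_eq' (by simpa using hu), N, fun n hn => ?_, fun useq hsol => ?_⟩
  · simp_rw [Submodule.mem_and_starProjection_sub_eq_iff]
    exact (ContinuousLinearMap.isUnit_iff_bijective.1 (hN n hn)).existsUnique _
  · rw [ContinuousLinearMap.eq_ring_inverse_apply hunit hu]
    refine (ContinuousLinearMap.tendsto_ring_inverse_apply hunit hT (hPx f)).congr'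
      (eventually_atTop.2 ⟨N, fun n hn => ?_⟩)
    exact (ContinuousLinearMap.eq_ring_inverse_apply (hN n hn)
      ((Submodule.mem_and_starProjection_sub_eq_iff K f (useq n)).1 (hsol n hn))).symm

/-- Convergence of the projection (Galerkin) method: if `K` is compact with
`N(I - K) = {0}`, `{Lₙ}` is an increasing limit-dense sequence of finite-dimensional
subspaces, and `Pₙ` is the orthogonal projection onto `Lₙ`, then for all sufficiently
large `n` the projected equation `Pₙ(I - K)uₙ = Pₙ f`, `uₙ ∈ Lₙ`, is uniquely solvable
and `uₙ → u`, the unique solution of `u = Ku + f`. -/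
theorem projection_method_converges
    {H : Type*} [NormedAddCommGroup H] [InnerProductSpace ℂ H] [CompleteSpace H]
    (K : H →L[ℂ] H) (hK : IsCompactOperator K)
    (hinj : ∀ u : H, u = K u → u = 0)
    (L : ℕ → Submodule ℂ H) (hfin : ∀ n, FiniteDimensional ℂ (L n))
    (hmono : Monotone L)
    (hdense : ∀ f : H, Tendsto (fun n => Metric.infDist f (L n : Set H)) atTop (nhds 0))
    (P : ℕ → H →L[ℂ] H)
    (hproj : ∀ (n : ℕ) (x : H), P n x ∈ L n ∧ ∀ y ∈ L n, ⟪x - P n x, y⟫_ℂ = 0)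
    (f : H) :
    ∃ u : H, (u = K u + f) ∧
      ∃ Nbig : ℕ,
        (∀ n ≥ Nbig, ∃! w : H, w ∈ L n ∧ P n (w - K w) = P n f) ∧
        ∀ useq : ℕ → H,
          (∀ n ≥ Nbig, useq n ∈ L n ∧ P n (useq n - K (useq n)) = P n f) →
          Tendsto useq atTop (nhds u) :=
  projection_method_converges_general K hK hinj L hdense P hproj f
end
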